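/- Let E be an exact category. An object (P•, ι•) of Mor_k(E) is projective in Mor_k(E) if and only if each P_i is projective in E and each ι_i is a split monomorphism; dually, (I•, π•) is injective in Mor_k(E) if and only if each I_i is injective in E and each π_i is a split epimorphism. -/

import Mathlib

open CategoryTheory Limits

universe v u

/-- An exact structure (in the sense of Quillen/Bühler) on an additive category `E`:
a class of kernel–cokernel pairs (`ses f g` meaning `X ↣ Y ↠ Z` is an admissible short
exact sequence), closed under isomorphism, such that admissible monomorphisms (resp.
epimorphisms) contain identities, are closed under composition, and are stable under
pushout (resp. pullback). -/
structure ExactStructure (E : Type u) [Category.{v} E] [Preadditive E] [HasZeroObject E] where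
  ses : ∀ ⦃X Y Z : E⦄, (X ⟶ Y) → (Y ⟶ Z) → Prop
  comp_zero : ∀ {X Y Z : E} {f : X ⟶ Y} {g : Y ⟶ Z}, ses f g → f ≫ g = 0
  isKernel : ∀ {X Y Z : E} {f : X ⟶ Y} {g : Y ⟶ Z} (h : ses f g),
      Nonempty (IsLimit (KernelFork.ofι f (comp_zero h)))
  isCokernel : ∀ {X Y Z : E} {f : X ⟶ Y} {g : Y ⟶ Z} (h : ses f g),
      Nonempty (IsColimit (CokernelCofork.ofπ g (comp_zero h)))
  iso_closed : ∀ {X Y Z X' Y' Z' : E} {f : X ⟶ Y} {g : Y ⟶ Z}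
      (eX : X ≅ X') (eY : Y ≅ Y') (eZ : Z ≅ Z') {f' : X' ⟶ Y'} {g' : Y' ⟶ Z'},
      f ≫ eY.hom = eX.hom ≫ f' → g ≫ eZ.hom = eY.hom ≫ g' → ses f g → ses f' g'
  id_mono : ∀ X : E, ∃ (Z : E) (g : X ⟶ Z), ses (𝟙 X) g
  id_epi : ∀ X : E, ∃ (W : E) (f : W ⟶ X), ses f (𝟙 X)
  mono_comp : ∀ {X Y Z : E} {f : X ⟶ Y} {g : Y ⟶ Z},
      (∃ (W : E) (h : Y ⟶ W), ses f h) → (∃ (W : E) (h : Z ⟶ W), ses g h) →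
      ∃ (W : E) (h : Z ⟶ W), ses (f ≫ g) h
  epi_comp : ∀ {X Y Z : E} {f : X ⟶ Y} {g : Y ⟶ Z},
      (∃ (W : E) (h : W ⟶ X), ses h f) → (∃ (W : E) (h : W ⟶ Y), ses h g) →
      ∃ (W : E) (h : W ⟶ X), ses h (f ≫ g)
  mono_pushout : ∀ {X Y Z : E} (f : X ⟶ Y) (t : X ⟶ Z),
      (∃ (W : E) (g : Y ⟶ W), ses f g) →
      ∃ (P : E) (f' : Z ⟶ P) (t' : Y ⟶ P), IsPushout t f f' t' ∧
        ∃ (W : E) (g : P ⟶ W), ses f' g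
  epi_pullback : ∀ {X Y Z : E} (g : Y ⟶ X) (t : Z ⟶ X),
      (∃ (W : E) (f : W ⟶ Y), ses f g) →
      ∃ (P : E) (g' : P ⟶ Z) (t' : P ⟶ Y), IsPullback g' t' t g ∧
        ∃ (W : E) (f : W ⟶ P), ses f g'

namespace ExactStructure

variable {E : Type u} [Category.{v} E] [Preadditive E] [HasZeroObject E]
variable (S : ExactStructure E)

/-- `f` is an admissible monomorphism. -/
def AdmMono {X Y : E} (f : X ⟶ Y) : Prop := ∃ (Z : E) (g : Y ⟶ Z), S.ses f g

/-- `g` is an admissible epimorphism. -/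
def AdmEpi {Y Z : E} (g : Y ⟶ Z) : Prop := ∃ (X : E) (f : X ⟶ Y), S.ses f g

/-- An object of `E` is injective (w.r.t. the exact structure). -/
def EInjective (I : E) : Prop :=
  ∀ ⦃X Y : E⦄ (f : X ⟶ Y), S.AdmMono f → ∀ u : X ⟶ I, ∃ v : Y ⟶ I, f ≫ v = u

/-- An object of `E` is projective (w.r.t. the exact structure). -/
def EProjective (P : E) : Prop :=
  ∀ ⦃Y Z : E⦄ (g : Y ⟶ Z), S.AdmEpi g → ∀ u : P ⟶ Z, ∃ v : P ⟶ Y, v ≫ g = u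

/-- An object of the monomorphism category `MMor_k(E)`: a diagram of `k` composable
admissible monomorphisms in `E`. -/
structure MMorObj (k : ℕ) where
  obj : Fin (k + 1) → E
  map : ∀ i : Fin k, obj i.castSucc ⟶ obj i.succ
  adm : ∀ i, S.AdmMono (map i)

/-- A morphism in the monomorphism category `MMor_k(E)`. -/
structure MMorHom {k : ℕ} (X Y : S.MMorObj k) where
  app : ∀ i, X.obj i ⟶ Y.obj i
  comm : ∀ i : Fin k, X.map i ≫ app i.succ = app i.castSucc ≫ Y.map i

variable {S}

/-- A componentwise admissible short exact sequence in `MMor_k(E)`. -/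
def MMorSes {k : ℕ} {X Y Z : S.MMorObj k} (f : S.MMorHom X Y) (g : S.MMorHom Y Z) : Prop :=
  ∀ i, S.ses (f.app i) (g.app i)

/-- Admissible monomorphisms of `MMor_k(E)`. -/
def MMorAdmMono {k : ℕ} {X Y : S.MMorObj k} (f : S.MMorHom X Y) : Prop :=
  ∃ (Z : S.MMorObj k) (g : S.MMorHom Y Z), MMorSes f g

/-- Admissible epimorphisms of `MMor_k(E)`. -/
def MMorAdmEpi {k : ℕ} {Y Z : S.MMorObj k} (g : S.MMorHom Y Z) : Prop :=
  ∃ (X : S.MMorObj k) (f : S.MMorHom X Y), MMorSes f g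

/-- Injective objects of the exact category `MMor_k(E)`. -/
def MMorInjective {k : ℕ} (I : S.MMorObj k) : Prop :=
  ∀ ⦃X Y : S.MMorObj k⦄ (f : S.MMorHom X Y), MMorAdmMono f →
    ∀ u : S.MMorHom X I, ∃ v : S.MMorHom Y I, ∀ i, f.app i ≫ v.app i = u.app i

/-- Projective objects of the exact category `MMor_k(E)`. -/
def MMorProjective {k : ℕ} (P : S.MMorObj k) : Prop :=
  ∀ ⦃Y Z : S.MMorObj k⦄ (g : S.MMorHom Y Z), MMorAdmEpi g →
    ∀ u : S.MMorHom P Z, ∃ v : S.MMorHom P Y, ∀ i, v.app i ≫ g.app i = u.app i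

end ExactStructure

namespace ExactStructure

variable {E : Type u} [Category.{v} E] [Preadditive E] [HasZeroObject E]
variable (S : ExactStructure E)

/-- An object of `Mor_k(E)`: a diagram of `k` composable morphisms in `E`. -/
structure MorObj (k : ℕ) where
  obj : Fin (k + 1) → E
  map : ∀ i : Fin k, obj i.castSucc ⟶ obj i.succ

/-- A morphism in `Mor_k(E)`. -/
structure MorHom {k : ℕ} (X Y : MorObj (E := E) k) where
  app : ∀ i, X.obj i ⟶ Y.obj i
  comm : ∀ i : Fin k, X.map i ≫ app i.succ = app i.castSucc ≫ Y.map i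

variable {S}

/-- A componentwise admissible short exact sequence in `Mor_k(E)`. -/
def MorSes {k : ℕ} {X Y Z : MorObj (E := E) k} (f : MorHom X Y) (g : MorHom Y Z) : Prop :=
  ∀ i, S.ses (f.app i) (g.app i)

/-- Admissible epimorphisms of `Mor_k(E)`. -/
def MorAdmEpi {k : ℕ} {Y Z : MorObj (E := E) k} (g : MorHom Y Z) : Prop :=
  ∃ (X : MorObj (E := E) k) (f : MorHom X Y), MorSes (S := S) f g

/-- Admissible monomorphisms of `Mor_k(E)`. -/
def MorAdmMono {k : ℕ} {X Y : MorObj (E := E) k} (f : MorHom X Y) : Prop :=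
  ∃ (Z : MorObj (E := E) k) (g : MorHom Y Z), MorSes (S := S) f g

/-- Projective objects of the exact category `Mor_k(E)`. -/
def MorProjective {k : ℕ} (P : MorObj (E := E) k) : Prop :=
  ∀ ⦃Y Z : MorObj (E := E) k⦄ (g : MorHom Y Z), MorAdmEpi (S := S) g →
    ∀ u : MorHom P Z, ∃ v : MorHom P Y, ∀ i, v.app i ≫ g.app i = u.app i

/-- Injective objects of the exact category `Mor_k(E)`. -/
def MorInjective {k : ℕ} (I : MorObj (E := E) k) : Prop :=
  ∀ ⦃X Y : MorObj (E := E) k⦄ (f : MorHom X Y), MorAdmMono (S := S) f →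
    ∀ u : MorHom X I, ∃ v : MorHom Y I, ∀ i, f.app i ≫ v.app i = u.app i

end ExactStructure

/-! Maps from `P` to the diagram `A≤j := indicator (· ≤ j) A` (equal to `A`, with identity
maps, up to index `j` and to `0` after it) correspond to maps `P j ⟶ A`, and `A ↦ A≤j` is exact,
so lifting against it shows that each `P j` is projective. The sequence `A>m ↣ A ↠ A≤m`, with the
constant diagram in the middle, is admissible; lifting the map `P ⟶ (P m)≤m` that corresponds to
`𝟙 (P m)` gives a retraction of `P.map m`. Conversely, a lift against a componentwise admissible
epimorphism `g` is built index by index: the lift at `m + 1` provided by projectivity of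
`P (m + 1)` is made compatible with the lift at `m` by subtracting a map into the kernel of `g`,
extended along the retraction of `P.map m`. Injectives are dual. -/

lemma Fin.exists_forall_rel_castSucc_succ {n : ℕ} {M : Fin (n + 1) → Type*}
    (R : ∀ m : Fin n, M m.castSucc → M m.succ → Prop) (z : M 0)
    (step : ∀ m x, ∃ y, R m x y) : ∃ V : ∀ i, M i, ∀ m, R m (V m.castSucc) (V m.succ) :=
  ⟨Fin.induction z fun m x => (step m x).choose, fun m => by
    simp only [Fin.induction_succ]
    exact (step m _).choose_spec⟩

lemma Fin.exists_forall_rel_succ_castSucc {n : ℕ} {M : Fin (n + 1) → Type*}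
    (R : ∀ m : Fin n, M m.succ → M m.castSucc → Prop) (z : M (Fin.last n))
    (step : ∀ m x, ∃ y, R m x y) : ∃ V : ∀ i, M i, ∀ m, R m (V m.succ) (V m.castSucc) :=
  ⟨Fin.reverseInduction z fun m x => (step m x).choose, fun m => by
    simp only [Fin.reverseInduction_castSucc]
    exact (step m _).choose_spec⟩

namespace ExactStructure

namespace MorObj

variable {E : Type u} [Category.{v} E] {k : ℕ}

noncomputable def mapLE (P : MorObj (E := E) k) {i j : Fin (k + 1)} (h : i ≤ j) :
    P.obj i ⟶ P.obj j :=
  (ComposableArrows.mkOfObjOfMapSucc P.obj P.map).map (homOfLE h)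

@[simp]
lemma mapLE_refl (P : MorObj (E := E) k) (i : Fin (k + 1)) : P.mapLE (le_refl i) = 𝟙 _ :=
  CategoryTheory.Functor.map_id _ _

@[simp]
lemma mapLE_comp_mapLE (P : MorObj (E := E) k) {i j l : Fin (k + 1)} (hij : i ≤ j)
    (hjl : j ≤ l) : P.mapLE hij ≫ P.mapLE hjl = P.mapLE (hij.trans hjl) :=
  (CategoryTheory.Functor.map_comp _ _ _).symm

lemma mapLE_castSucc_succ (P : MorObj (E := E) k) (m : Fin k) :
    P.mapLE m.castSucc_le_succ = P.map m :=
  ComposableArrows.mkOfObjOfMapSucc_map_succ P.obj P.map m m.isLt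

abbrev const (A : E) : MorObj (E := E) k where
  obj _ := A
  map _ := 𝟙 A

end MorObj

open ZeroObject

variable {E : Type u} [Category.{v} E] [Preadditive E] [HasZeroObject E]
variable {S : ExactStructure E}

lemma ses_id_zero (X : E) : S.ses (𝟙 X) (0 : X ⟶ 0) := by
  obtain ⟨Z, g, h⟩ := S.id_mono X
  obtain ⟨hc⟩ := S.isCokernel h
  have hg : g = 0 := by simpa using S.comp_zero h
  have hZ : IsZero Z := by
    rw [IsZero.iff_id_eq_zero]
    exact Cofork.IsColimit.hom_ext hc (by simp [hg])
  exact S.iso_closed (Iso.refl X) (Iso.refl X) hZ.isoZero (by simp) (by simp [hg]) h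

lemma ses_zero_id (X : E) : S.ses (0 : (0 : E) ⟶ X) (𝟙 X) := by
  obtain ⟨W, f, h⟩ := S.id_epi X
  obtain ⟨hk⟩ := S.isKernel h
  have hf : f = 0 := by simpa using S.comp_zero h
  have hW : IsZero W := by
    rw [IsZero.iff_id_eq_zero]
    exact Fork.IsLimit.hom_ext hk (by simp [hf])
  exact S.iso_closed hW.isoZero (Iso.refl X) (Iso.refl X) (by simp [hf]) (by simp) h

lemma ses_zero_zero : S.ses (0 : (0 : E) ⟶ 0) (0 : (0 : E) ⟶ 0) := by
  simpa only [(isZero_zero E).eq_of_src (𝟙 0) 0] using ses_id_zero (S := S) (0 : E)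

lemma ses.exists_lift {X Y Z : E} {f : X ⟶ Y} {g : Y ⟶ Z} (h : S.ses f g) {W : E}
    (d : W ⟶ Y) (hd : d ≫ g = 0) : ∃ e : W ⟶ X, e ≫ f = d :=
  ⟨_, (KernelFork.IsLimit.lift' (S.isKernel h).some d hd).2⟩

lemma ses.exists_desc {X Y Z : E} {f : X ⟶ Y} {g : Y ⟶ Z} (h : S.ses f g) {W : E}
    (d : Y ⟶ W) (hd : f ≫ d = 0) : ∃ e : Z ⟶ W, g ≫ e = d :=
  ⟨_, (CokernelCofork.IsColimit.desc' (S.isCokernel h).some d hd).2⟩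

lemma EProjective.exists_lift_extending {P P' X Y Z : E} (hP' : S.EProjective P')
    {f : X ⟶ Y} {g : Y ⟶ Z} (hfg : S.ses f g) {ι : P ⟶ P'} {r : P' ⟶ P} (hr : ι ≫ r = 𝟙 P)
    (u : P' ⟶ Z) (a : P ⟶ Y) (ha : a ≫ g = ι ≫ u) :
    ∃ v : P' ⟶ Y, v ≫ g = u ∧ ι ≫ v = a := by
  obtain ⟨w, hw⟩ := hP' g ⟨X, f, hfg⟩ u
  obtain ⟨e, he⟩ := hfg.exists_lift (ι ≫ w - a) (by simp [hw, ha])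
  -- correcting `w` by `r ≫ e ≫ f` does not change `w ≫ g`, and fixes `ι ≫ w`
  refine ⟨w - r ≫ e ≫ f, ?_, ?_⟩
  · simp [hw, S.comp_zero hfg]
  · simp [← Category.assoc, hr, he]

lemma EInjective.exists_extension_extending {I I' X Y Z : E} (hI' : S.EInjective I')
    {f : X ⟶ Y} {g : Y ⟶ Z} (hfg : S.ses f g) {π : I' ⟶ I} {s : I ⟶ I'} (hs : s ≫ π = 𝟙 I)
    (u : X ⟶ I') (b : Y ⟶ I) (hb : f ≫ b = u ≫ π) :
    ∃ v : Y ⟶ I', f ≫ v = u ∧ v ≫ π = b := by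
  obtain ⟨w, hw⟩ := hI' f ⟨Z, g, hfg⟩ u
  obtain ⟨e, he⟩ := hfg.exists_desc (b - w ≫ π) (by simp [← Category.assoc, hw, hb])
  refine ⟨w + g ≫ e ≫ s, ?_, ?_⟩
  · simp [hw, ← Category.assoc, S.comp_zero hfg]
  · simp [hs, he]

variable {k : ℕ}

namespace MorObj

noncomputable abbrev indicator (p : Fin (k + 1) → Prop) [DecidablePred p] (A : E) :
    MorObj (E := E) k where
  obj j := if p j then A else 0
  map i := if h : p i.castSucc ∧ p i.succ then eqToHom (by rw [if_pos h.1, if_pos h.2]) else 0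

end MorObj

namespace MorHom

open MorObj

variable (p : Fin (k + 1) → Prop) [DecidablePred p]

noncomputable def indicatorMap {A B : E} (φ : A ⟶ B) :
    MorHom (indicator (E := E) p A) (indicator p B) where
  app j := if h : p j then eqToHom (if_pos h) ≫ φ ≫ eqToHom (if_pos h).symm else 0
  comm i := by
    by_cases h₁ : p i.castSucc <;> by_cases h₂ : p i.succ <;> simp [h₁, h₂]

noncomputable def indicatorToConst (A : E) (hp : ∀ i : Fin k, p i.castSucc → p i.succ) :
    MorHom (indicator (E := E) p A) (const A) where
  app j := if h : p j then eqToHom (if_pos h) else 0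
  comm i := by
    by_cases h₁ : p i.castSucc
    · simp [h₁, hp i h₁]
    · by_cases h₂ : p i.succ <;> simp [h₁, h₂]

noncomputable def constToIndicator (A : E) (hp : ∀ i : Fin k, p i.succ → p i.castSucc) :
    MorHom (const (E := E) A) (indicator p A) where
  app j := if h : p j then eqToHom (if_pos h).symm else 0
  comm i := by
    by_cases h₂ : p i.succ
    · simp [h₂, hp i h₂]
    · by_cases h₁ : p i.castSucc <;> simp [h₁, h₂]

variable {P I : MorObj (E := E) k} {A : E}

noncomputable def toIndicatorLE (j : Fin (k + 1)) (u : P.obj j ⟶ A) :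
    MorHom P (indicator (· ≤ j) A) where
  app i := if h : i ≤ j then P.mapLE h ≫ u ≫ eqToHom (if_pos h).symm else 0
  comm m := by
    by_cases h₂ : m.succ ≤ j
    · have h₁ : m.castSucc ≤ j := m.castSucc_le_succ.trans h₂
      rw [dif_pos h₂, dif_pos h₁, ← P.mapLE_castSucc_succ, ← Category.assoc, P.mapLE_comp_mapLE]
      simp [h₁, h₂]
    · by_cases h₁ : m.castSucc ≤ j <;> simp [h₁, h₂]

noncomputable def fromIndicatorGE (j : Fin (k + 1)) (u : A ⟶ I.obj j) :
    MorHom (indicator (j ≤ ·) A) I where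
  app i := if h : j ≤ i then eqToHom (if_pos h) ≫ u ≫ I.mapLE h else 0
  comm m := by
    by_cases h₁ : j ≤ m.castSucc
    · have h₂ : j ≤ m.succ := h₁.trans m.castSucc_le_succ
      simp [h₁, h₂, ← I.mapLE_castSucc_succ]
    · by_cases h₂ : j ≤ m.succ <;> simp [h₁, h₂]

end MorHom

lemma morSes_indicatorMap (p : Fin (k + 1) → Prop) [DecidablePred p] {X Y Z : E}
    {f : X ⟶ Y} {g : Y ⟶ Z} (h : S.ses f g) :
    MorSes (S := S) (MorHom.indicatorMap p f) (MorHom.indicatorMap p g) := by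
  intro j
  by_cases hj : p j
  · exact S.iso_closed (eqToIso (if_pos hj).symm) (eqToIso (if_pos hj).symm)
      (eqToIso (if_pos hj).symm) (by simp [MorHom.indicatorMap, hj])
      (by simp [MorHom.indicatorMap, hj]) h
  · exact S.iso_closed (eqToIso (if_neg hj).symm) (eqToIso (if_neg hj).symm)
      (eqToIso (if_neg hj).symm) (by simp [MorHom.indicatorMap, hj])
      (by simp [MorHom.indicatorMap, hj]) ses_zero_zero

lemma morSes_indicatorToConst_constToIndicator (p q : Fin (k + 1) → Prop) [DecidablePred p]
    [DecidablePred q] (A : E) (hpq : ∀ j, q j ↔ ¬ p j)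
    (hp : ∀ i : Fin k, p i.castSucc → p i.succ) (hq : ∀ i : Fin k, q i.succ → q i.castSucc) :
    MorSes (S := S) (MorHom.indicatorToConst p A hp) (MorHom.constToIndicator q A hq) := by
  intro j
  by_cases hj : p j
  · have hqj : ¬ q j := fun h => (hpq j).1 h hj
    exact S.iso_closed (eqToIso (if_pos hj).symm) (Iso.refl A) (eqToIso (if_neg hqj).symm)
      (by simp [MorHom.indicatorToConst, hj]) (by simp [MorHom.constToIndicator, hqj])
      (ses_id_zero A)
  · have hqj : q j := (hpq j).2 hj
    exact S.iso_closed (eqToIso (if_neg hj).symm) (Iso.refl A) (eqToIso (if_pos hqj).symm)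
      (by simp [MorHom.indicatorToConst, hj]) (by simp [MorHom.constToIndicator, hqj])
      (ses_zero_id A)

variable {P I : MorObj (E := E) k}

lemma MorProjective.eProjective (hP : MorProjective (S := S) P) (j : Fin (k + 1)) :
    S.EProjective (P.obj j) := by
  rintro Y Z g ⟨X, f, hfg⟩ u
  obtain ⟨v, hv⟩ := hP (MorHom.indicatorMap (· ≤ j) g) ⟨_, _, morSes_indicatorMap _ hfg⟩
    (MorHom.toIndicatorLE j u)
  refine ⟨v.app j ≫ eqToHom (if_pos le_rfl), ?_⟩
  simpa [MorHom.indicatorMap, MorHom.toIndicatorLE, ← Category.assoc, cancel_mono] using hv j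

lemma MorInjective.eInjective (hI : MorInjective (S := S) I) (j : Fin (k + 1)) :
    S.EInjective (I.obj j) := by
  rintro X Y f ⟨Z, g, hfg⟩ u
  obtain ⟨v, hv⟩ := hI (MorHom.indicatorMap (j ≤ ·) f) ⟨_, _, morSes_indicatorMap _ hfg⟩
    (MorHom.fromIndicatorGE j u)
  refine ⟨eqToHom (if_pos le_rfl).symm ≫ v.app j, ?_⟩
  simpa [MorHom.indicatorMap, MorHom.fromIndicatorGE, cancel_epi] using hv j

lemma morSes_indicatorGE_const_indicatorLE (m : Fin k) (A : E) :
    MorSes (S := S)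
      (MorHom.indicatorToConst (m.succ ≤ ·) A fun _ h => h.trans (Fin.castSucc_le_succ _))
      (MorHom.constToIndicator (· ≤ m.castSucc) A fun _ h => (Fin.castSucc_le_succ _).trans h) :=
  morSes_indicatorToConst_constToIndicator _ _ A
    (fun _ => by rw [Fin.le_castSucc_iff, not_le]) _ _

lemma MorProjective.exists_retraction (hP : MorProjective (S := S) P) (m : Fin k) :
    ∃ r : P.obj m.succ ⟶ P.obj m.castSucc, P.map m ≫ r = 𝟙 _ := by
  obtain ⟨v, hv⟩ := hP _ ⟨_, _, morSes_indicatorGE_const_indicatorLE m _⟩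
    (MorHom.toIndicatorLE m.castSucc (𝟙 _))
  have hv₀ : v.app m.castSucc = 𝟙 _ := by
    simpa [MorHom.constToIndicator, MorHom.toIndicatorLE, comp_eqToHom_iff] using hv m.castSucc
  exact ⟨v.app m.succ, by simpa [hv₀] using v.comm m⟩

lemma MorInjective.exists_section (hI : MorInjective (S := S) I) (m : Fin k) :
    ∃ s : I.obj m.succ ⟶ I.obj m.castSucc, s ≫ I.map m = 𝟙 _ := by
  obtain ⟨v, hv⟩ := hI _ ⟨_, _, morSes_indicatorGE_const_indicatorLE m _⟩
    (MorHom.fromIndicatorGE m.succ (𝟙 _))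
  have hv₀ : v.app m.succ = 𝟙 _ := by
    simpa [MorHom.indicatorToConst, MorHom.fromIndicatorGE, eqToHom_comp_iff] using hv m.succ
  exact ⟨v.app m.castSucc, by simpa [hv₀] using (v.comm m).symm⟩

lemma morProjective_of_eProjective (hP : ∀ i, S.EProjective (P.obj i))
    (hsplit : ∀ i : Fin k, ∃ r : P.obj i.succ ⟶ P.obj i.castSucc, P.map i ≫ r = 𝟙 _) :
    MorProjective (S := S) P := by
  rintro Y Z g ⟨X, f, hfg⟩ u
  obtain ⟨v₀, hv₀⟩ := hP 0 (g.app 0) ⟨_, _, hfg 0⟩ (u.app 0)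
  obtain ⟨V, hV⟩ := Fin.exists_forall_rel_castSucc_succ
    (M := fun i => {v : P.obj i ⟶ Y.obj i // v ≫ g.app i = u.app i})
    (fun m v v' => P.map m ≫ v'.1 = v.1 ≫ Y.map m) ⟨v₀, hv₀⟩ fun m v => by
      obtain ⟨r, hr⟩ := hsplit m
      obtain ⟨v', hv'g, hv'⟩ := (hP m.succ).exists_lift_extending (hfg m.succ) hr
        (u.app m.succ) (v.1 ≫ Y.map m)
        (by rw [Category.assoc, g.comm, ← Category.assoc, v.2, u.comm])
      exact ⟨⟨v', hv'g⟩, hv'⟩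
  exact ⟨⟨fun i => (V i).1, hV⟩, fun i => (V i).2⟩

lemma morInjective_of_eInjective (hI : ∀ i, S.EInjective (I.obj i))
    (hsplit : ∀ i : Fin k, ∃ s : I.obj i.succ ⟶ I.obj i.castSucc, s ≫ I.map i = 𝟙 _) :
    MorInjective (S := S) I := by
  rintro X Y f ⟨Z, g, hfg⟩ u
  obtain ⟨v₀, hv₀⟩ := hI (Fin.last k) (f.app _) ⟨_, _, hfg _⟩ (u.app _)
  obtain ⟨V, hV⟩ := Fin.exists_forall_rel_succ_castSucc
    (M := fun i => {v : Y.obj i ⟶ I.obj i // f.app i ≫ v = u.app i})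
    (fun m v' v => Y.map m ≫ v'.1 = v.1 ≫ I.map m) ⟨v₀, hv₀⟩ fun m v' => by
      obtain ⟨s, hs⟩ := hsplit m
      obtain ⟨v, hvf, hv⟩ := (hI m.castSucc).exists_extension_extending (hfg m.castSucc) hs
        (u.app m.castSucc) (Y.map m ≫ v'.1)
        (by rw [← Category.assoc, ← f.comm, Category.assoc, v'.2, u.comm])
      exact ⟨⟨v, hvf⟩, hv.symm⟩
  exact ⟨⟨fun i => (V i).1, hV⟩, fun i => (V i).2⟩

end ExactStructure

/-- Let `E` be an exact category.  An object `(P•, ι•)` of `Mor_k(E)` is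
projective if and only if each `P i` is projective in `E` and each `ι i` is a split
monomorphism; dually, `(I•, π•)` is injective in `Mor_k(E)` if and only if each `I i` is
injective in `E` and each `π i` is a split epimorphism. -/
theorem mor_projective_injective_iff
    {E : Type u} [Category.{v} E] [Preadditive E] [HasZeroObject E]
    (S : ExactStructure E) (k : ℕ) :
    (∀ P : ExactStructure.MorObj (E := E) k,
      ExactStructure.MorProjective (S := S) P ↔
        ((∀ i, S.EProjective (P.obj i)) ∧
          ∀ i : Fin k, ∃ r : P.obj i.succ ⟶ P.obj i.castSucc,
            P.map i ≫ r = 𝟙 (P.obj i.castSucc))) ∧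
    (∀ I : ExactStructure.MorObj (E := E) k,
      ExactStructure.MorInjective (S := S) I ↔
        ((∀ i, S.EInjective (I.obj i)) ∧
          ∀ i : Fin k, ∃ s : I.obj i.succ ⟶ I.obj i.castSucc,
            s ≫ I.map i = 𝟙 (I.obj i.succ))) :=
  ⟨fun _ => ⟨fun h => ⟨h.eProjective, h.exists_retraction⟩,
      fun h => ExactStructure.morProjective_of_eProjective h.1 h.2⟩,
    fun _ => ⟨fun h => ⟨h.eInjective, h.exists_section⟩,
      fun h => ExactStructure.morInjective_of_eInjective h.1 h.2⟩⟩
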